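/- Any element l of W(g,1) that is ad-diagonalizable with respect to the basis {⟨a,i⟩} must lie in the zero-graded component W_0 = span{⟨0,i⟩ : i ∈ ℤ}. -/

import Mathlib

/-!
Bracketing with `⟨0, i + 1⟩` sends `⟨a, j⟩` to `-g(a) ⟨a, i + j + 1⟩ + (i + 1 - j) ⟨a, i + j⟩`, so the
coefficient of `⟨a, 2i + 1⟩` in `[l, ⟨0, i + 1⟩]` is `-g(a)` times the coefficient of `⟨a, i⟩` in `l`:
the contribution of `⟨a, i + 1⟩` carries the factor `i + 1 - (i + 1) = 0`. If `l` acts diagonally,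
`[l, ⟨0, i + 1⟩]` is a multiple of `⟨0, i + 1⟩`, so for `a ≠ 0` this coefficient vanishes, and
`g(a) ≠ 0` by injectivity.
-/

theorem Module.Basis.mem_span_range_prodMk_of_repr_eq_zero {ι κ R M : Type*} [Semiring R]
    [AddCommMonoid M] [Module R M] (b : Module.Basis (ι × κ) R M) {x : M} {i₀ : ι}
    (hx : ∀ i j, i ≠ i₀ → b.repr x (i, j) = 0) :
    x ∈ Submodule.span R (Set.range fun j => b (i₀, j)) := by
  rw [show (fun j => b (i₀, j)) = b ∘ Prod.mk i₀ from rfl, Set.range_comp, b.mem_span_image]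
  rintro ⟨i, j⟩ hij
  obtain rfl : i = i₀ := by_contra fun h => Finsupp.mem_support_iff.mp hij (hx i j h)
  exact ⟨j, rfl⟩

section WittBasis

variable {F W : Type*} [CommRing F] [LieRing W] [LieAlgebra F W]

/-- `E (a, i)` is the basis vector `⟨a, i⟩` of `W(g, 1)`. -/
def IsWittBasis (g : ℤ →+ F) (E : Module.Basis (ℤ × ℤ) F W) : Prop :=
  ∀ a i b j : ℤ, ⁅E (a, i), E (b, j)⁆ =
    (g b - g a) • E (a + b, i + j) + ((j - i : ℤ) : F) • E (a + b, i + j - 1)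

theorem IsWittBasis.repr_lie_basis_zero {g : ℤ →+ F} {E : Module.Basis (ℤ × ℤ) F W}
    (hE : IsWittBasis g E) (x : W) (a j k : ℤ) :
    E.repr ⁅x, E (0, k)⁆ (a, j + k) =
      -g a * E.repr x (a, j) + ((k - j - 1 : ℤ) : F) * E.repr x (a, j + 1) := by
  let lhs : W →ₗ[F] F :=
    Finsupp.lapply (a, j + k) ∘ₗ E.repr.toLinearMap ∘ₗ
      (LieAlgebra.ad F W : W →ₗ[F] Module.End F W).flip (E (0, k))
  let rhs : W →ₗ[F] F :=
    (-g a) • (Finsupp.lapply (a, j) ∘ₗ E.repr.toLinearMap) +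
      ((k - j - 1 : ℤ) : F) • (Finsupp.lapply (a, j + 1) ∘ₗ E.repr.toLinearMap)
  suffices lhs = rhs by simpa [lhs, rhs] using LinearMap.congr_fun this x
  refine E.ext fun ⟨b, j'⟩ => ?_
  change E.repr ⁅E (b, j'), E (0, k)⁆ (a, j + k) =
    -g a * E.repr (E (b, j')) (a, j) + ((k - j - 1 : ℤ) : F) * E.repr (E (b, j')) (a, j + 1)
  rw [hE, map_add, map_smul, map_smul, E.repr_self, E.repr_self, E.repr_self, map_zero, zero_sub,
    add_zero]
  obtain rfl | hb := eq_or_ne b a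
  · obtain rfl | hj := eq_or_ne j' j
    · simp
    obtain rfl | hj' := eq_or_ne j' (j + 1)
    · simp [show j + 1 + k - 1 = j + k by ring]
      ring
    · simp [hj, hj', show j' + k - 1 ≠ j + k by omega]
  · simp [hb]

theorem IsWittBasis.repr_eq_zero_of_lie_eq_smul [NoZeroDivisors F] {g : ℤ →+ F}
    {E : Module.Basis (ℤ × ℤ) F W} (hE : IsWittBasis g E) {x : W} {a i : ℤ} (ha : g a ≠ 0) {α : F}
    (hx : ⁅x, E (0, i + 1)⁆ = α • E (0, i + 1)) : E.repr x (a, i) = 0 := by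
  have ha₀ : a ≠ 0 := by
    rintro rfl
    exact ha (map_zero g)
  have h := hE.repr_lie_basis_zero x a i (i + 1)
  rw [hx, map_smul, E.repr_self, show i + 1 - i - 1 = 0 by ring] at h
  simpa [Finsupp.single_apply, ha₀.symm, ha] using h

end WittBasis

theorem ad_diagonalizable_mem_W0_general (F : Type*) [Field F] (g : ℤ →+ F)
    (hg : Function.Injective g)
    (W : Type*) [LieRing W] [LieAlgebra F W] (E : Module.Basis (ℤ × ℤ) F W)
    (hbr : ∀ a i b j : ℤ, ⁅E (a, i), E (b, j)⁆ =
      (g b - g a) • E (a + b, i + j) + ((j - i : ℤ) : F) • E (a + b, i + j - 1))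
    (l : W) (hl : ∀ a i : ℤ, ∃ α : F, ⁅l, E (a, i)⁆ = α • E (a, i)) :
    l ∈ Submodule.span F (Set.range fun i : ℤ => E (0, i)) := by
  refine E.mem_span_range_prodMk_of_repr_eq_zero fun a i ha => ?_
  obtain ⟨α, hα⟩ := hl 0 (i + 1)
  exact IsWittBasis.repr_eq_zero_of_lie_eq_smul hbr ((map_ne_zero_iff g hg).mpr ha) hα

theorem ad_diagonalizable_mem_W0 (F : Type*) [Field F] [CharZero F] (g : ℤ →+ F)
    (hg : Function.Injective g)
    (W : Type*) [LieRing W] [LieAlgebra F W] (E : Module.Basis (ℤ × ℤ) F W)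
    (hbr : ∀ a i b j : ℤ, ⁅E (a, i), E (b, j)⁆ =
      (g b - g a) • E (a + b, i + j) + ((j - i : ℤ) : F) • E (a + b, i + j - 1))
    (l : W) (hl : ∀ a i : ℤ, ∃ α : F, ⁅l, E (a, i)⁆ = α • E (a, i)) :
    l ∈ Submodule.span F (Set.range fun i : ℤ => E (0, i)) :=
  ad_diagonalizable_mem_W0_general F g hg W E hbr l hl
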